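/- arXiv:2511.20687 — 2 statements merged into one kernel-verified Lean document; each statement's English description precedes it below -/
import Mathlib

section
/- Let U = Φ Σ Ψᵀ be a singular value decomposition of U, and for r ≤ min(N,m) let Φ_r ∈ ℝ^{N×r} consist of the first r columns of Φ. Then the squared Frobenius norm of the POD truncation error satisfies ‖U − Φ_r Φ_rᵀ U‖_F² = Σ_{i=r+1}^{min(N,m)} σ_i². -/
open Matrix BigOperators

/-!
Writing the squared Frobenius norm as `trace (A * Aᵀ)` makes it invariant under `A ↦ Φ * A` and
`A ↦ A * Ψᵀ` for orthogonal `Φ`, `Ψ`. Since `Φr` is `Φ` restricted to the first `r` columns,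
`Φr * Φrᵀ = Φ * P * Φᵀ` with `P` the coordinate projection onto those columns, so the truncation
error is `Φ * (S - P * S) * Ψᵀ`. Its norm is that of `S - P * S`, which is `S` with the first `r`
rows deleted: a rectangular diagonal matrix carrying `σ r, …, σ (min N m - 1)`.
-/

namespace Matrix

variable {ι κ m n R : Type*}

theorem submatrix_mul_transpose_submatrix_of_injective [Semiring R] [Fintype ι] [Fintype κ]
    [DecidableEq κ] (A : Matrix m κ R) (B : Matrix n κ R) {e : ι → κ} (he : Function.Injective e) :
    A.submatrix id e * (B.submatrix id e)ᵀ =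
      A * diagonal ((Set.range e).indicator (1 : κ → R)) * Bᵀ := by
  ext i k
  rw [mul_apply, mul_apply]
  simp only [mul_diagonal, submatrix_apply, transpose_apply, id]
  refine Fintype.sum_of_injective e he _ _ (fun l hl => ?_) (fun j => ?_)
  · simp [Set.indicator_of_notMem hl]
  · simp

variable [CommSemiring R] [Fintype m] [Fintype n]

theorem sum_sq_eq_trace_mul_transpose (A : Matrix m n R) :
    ∑ i, ∑ j, A i j ^ 2 = trace (A * Aᵀ) := by
  simp only [trace, diag, mul_apply, transpose_apply, sq]

theorem sum_sq_mul_of_transpose_mul_self_eq_one [DecidableEq m] {Φ : Matrix m m R}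
    (hΦ : Φᵀ * Φ = 1) (A : Matrix m n R) : ∑ i, ∑ j, (Φ * A) i j ^ 2 = ∑ i, ∑ j, A i j ^ 2 := by
  rw [sum_sq_eq_trace_mul_transpose, sum_sq_eq_trace_mul_transpose, transpose_mul,
    Matrix.mul_assoc, trace_mul_comm, Matrix.mul_assoc, Matrix.mul_assoc, hΦ, Matrix.mul_one]

theorem sum_sq_mul_transpose_of_transpose_mul_self_eq_one [DecidableEq n] {Ψ : Matrix n n R}
    (hΨ : Ψᵀ * Ψ = 1) (A : Matrix m n R) : ∑ i, ∑ j, (A * Ψᵀ) i j ^ 2 = ∑ i, ∑ j, A i j ^ 2 := by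
  rw [sum_sq_eq_trace_mul_transpose, sum_sq_eq_trace_mul_transpose, transpose_mul,
    transpose_transpose, Matrix.mul_assoc, ← Matrix.mul_assoc Ψᵀ, hΨ, Matrix.one_mul]

end Matrix

theorem Fin.sum_sum_sq_ite_val_eq_and_le {R : Type*} [CommSemiring R] (N m r : ℕ) (f : ℕ → R) :
    ∑ i : Fin N, ∑ j : Fin m, (if (i : ℕ) = j ∧ r ≤ i then f i else 0) ^ 2 =
      ∑ i ∈ Finset.Ico r (min N m), f i ^ 2 := by
  have hrow (i : ℕ) : ∑ j : Fin m, (if i = j ∧ r ≤ i then f i else 0) ^ 2 =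
      if i < m ∧ r ≤ i then f i ^ 2 else 0 := by
    rw [Fin.sum_univ_eq_sum_range (fun j => (if i = j ∧ r ≤ i then f i else 0) ^ 2)]
    simp [ite_pow, ite_and]
  simp only [hrow]
  rw [Fin.sum_univ_eq_sum_range (fun i => if i < m ∧ r ≤ i then f i ^ 2 else 0),
    ← Finset.sum_filter]
  congr 1
  ext i
  simp only [Finset.mem_filter, Finset.mem_range, Finset.mem_Ico]
  omega

theorem pod_truncation_error_eq_sum_sq_singular_values_general
    (N m r : ℕ) (hr : r ≤ min N m)
    (U : Matrix (Fin N) (Fin m) ℝ)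
    (Φ : Matrix (Fin N) (Fin N) ℝ)
    (Ψ : Matrix (Fin m) (Fin m) ℝ)
    (S : Matrix (Fin N) (Fin m) ℝ)
    (σ : ℕ → ℝ)
    (hΦ : Φᵀ * Φ = 1) (hΨ : Ψᵀ * Ψ = 1)
    (hSVD : U = Φ * S * Ψᵀ)
    (hS : ∀ (i : Fin N) (j : Fin m), S i j = if (i : ℕ) = (j : ℕ) then σ (i : ℕ) else 0)
    (Φr : Matrix (Fin N) (Fin r) ℝ)
    (hΦr : ∀ (i : Fin N) (j : Fin r),
      Φr i j = Φ i (Fin.castLE (hr.trans (min_le_left N m)) j)) :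
    ∑ i, ∑ j, (U - Φr * Φrᵀ * U) i j ^ 2 = ∑ i ∈ Finset.Ico r (min N m), σ i ^ 2 := by
  set e := Fin.castLE (hr.trans (min_le_left N m))
  set P : Matrix (Fin N) (Fin N) ℝ := diagonal ((Set.range e).indicator 1)
  have hproj : Φr * Φrᵀ = Φ * P * Φᵀ := by
    rw [show Φr = Φ.submatrix id e from Matrix.ext hΦr]
    exact submatrix_mul_transpose_submatrix_of_injective Φ Φ (Fin.castLE_injective _)
  have herr : U - Φr * Φrᵀ * U = Φ * (S - P * S) * Ψᵀ := by
    rw [hproj, hSVD]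
    simp only [Matrix.mul_assoc, ← Matrix.mul_assoc Φᵀ, hΦ, Matrix.one_mul, Matrix.mul_sub,
      Matrix.sub_mul]
  have htail (i : Fin N) (j : Fin m) :
      (S - P * S) i j = if (i : ℕ) = j ∧ r ≤ i then σ i else 0 := by
    simp only [P, e, Matrix.sub_apply, diagonal_mul, hS, Fin.range_castLE, Set.indicator_apply,
      Set.mem_ofPred_eq, Pi.one_apply]
    split_ifs <;> first | omega | ring
  rw [herr, sum_sq_mul_transpose_of_transpose_mul_self_eq_one hΨ,
    sum_sq_mul_of_transpose_mul_self_eq_one hΦ]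
  simp only [htail]
  exact Fin.sum_sum_sq_ite_val_eq_and_le N m r σ

/-- **POD truncation error via singular values.**
If `U = Φ * S * Ψᵀ` is a singular value decomposition of `U ∈ ℝ^{N×m}` (with `Φ`, `Ψ`
orthogonal, `S` diagonal with nonincreasing nonnegative diagonal entries `σ 0, σ 1, ...`),
and `Φr` consists of the first `r ≤ min N m` columns of `Φ`, then the squared Frobenius
norm of the POD truncation error satisfies
`‖U − Φr Φrᵀ U‖_F² = ∑_{i = r}^{min N m - 1} (σ i)²` (0-based indexing). -/
theorem pod_truncation_error_eq_sum_sq_singular_values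
    (N m r : ℕ) (hN : 0 < N) (hm : 0 < m) (hr : r ≤ min N m)
    (U : Matrix (Fin N) (Fin m) ℝ)
    (Φ : Matrix (Fin N) (Fin N) ℝ)
    (Ψ : Matrix (Fin m) (Fin m) ℝ)
    (S : Matrix (Fin N) (Fin m) ℝ)
    (σ : ℕ → ℝ)
    (hΦ : Φᵀ * Φ = 1) (hΨ : Ψᵀ * Ψ = 1)
    (hSVD : U = Φ * S * Ψᵀ)
    (hS : ∀ (i : Fin N) (j : Fin m), S i j = if (i : ℕ) = (j : ℕ) then σ (i : ℕ) else 0)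
    (hmono : ∀ i j : ℕ, i ≤ j → j < min N m → σ j ≤ σ i)
    (hnonneg : ∀ i : ℕ, i < min N m → 0 ≤ σ i)
    (Φr : Matrix (Fin N) (Fin r) ℝ)
    (hΦr : ∀ (i : Fin N) (j : Fin r),
      Φr i j = Φ i (Fin.castLE (hr.trans (min_le_left N m)) j)) :
    ∑ i, ∑ j, (U - Φr * Φrᵀ * U) i j ^ 2 = ∑ i ∈ Finset.Ico r (min N m), σ i ^ 2 :=
  pod_truncation_error_eq_sum_sq_singular_values_general N m r hr U Φ Ψ S σ hΦ hΨ hSVD hS Φr hΦr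
end

section
/- Let μ ∈ ℝ and let C be a 3×3 real matrix with det C > 0. Then the Neohookean deviatoric free-energy density A^dev(C) = ½ μ ((det C)^{−1/3} tr C − 3) is Fréchet differentiable at C, with derivative in direction H equal to ½ μ (det C)^{−1/3} ( tr H − (1/3)(tr C) tr(C⁻¹ H) ). -/
/-!
By Jacobi's formula, `D det(C) H = det C · tr (C⁻¹ H)` for invertible `C`: since `det` is polynomial
in the entries, its Fréchet derivative is read off along the line `t ↦ C + t H = C (1 + t C⁻¹ H)`,
and `det (1 + t M) = 1 + t · tr M + O(t²)`. The chain rule for `x ↦ x^(-1/3)` then gives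
`-(1/3) (det C)^(-4/3) · det C · tr (C⁻¹ H) = -(1/3) (det C)^(-1/3) tr (C⁻¹ H)`, and the product
rule with the linear map `tr` yields the stated derivative.
-/

open Matrix

attribute [local instance] Matrix.frobeniusNormedAddCommGroup Matrix.frobeniusNormedSpace

namespace Matrix

variable {𝕜 : Type*} [NontriviallyNormedField 𝕜] {n : Type*} [Fintype n] [DecidableEq n]

theorem hasDerivAt_det_one_add_smul (M : Matrix n n 𝕜) :
    HasDerivAt (fun t : 𝕜 => (1 + t • M).det) M.trace 0 := by
  set p := (1 + (Polynomial.X : Polynomial 𝕜) • M.map Polynomial.C).det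
  have hp : (fun t : 𝕜 => (1 + t • M).det) = fun t => p.eval t := by
    funext t
    rw [← Polynomial.coe_evalRingHom, RingHom.map_det, map_add, map_one]
    congr 3
    ext i j
    simpa using mul_comm _ _
  rw [hp, ← derivative_det_one_add_X_smul M]
  exact p.hasDerivAt 0

variable [CompleteSpace 𝕜]

theorem differentiable_det : Differentiable 𝕜 (fun M : Matrix n n 𝕜 => M.det) := by
  have hentry (i j : n) : Differentiable 𝕜 (fun M : Matrix n n 𝕜 => M i j) :=
    (LinearMap.toContinuousLinearMap (entryLinearMap 𝕜 𝕜 i j)).differentiable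
  simp only [det_apply']
  fun_prop

theorem fderiv_det_apply {C : Matrix n n 𝕜} (hC : IsUnit C.det) (H : Matrix n n 𝕜) :
    fderiv 𝕜 (fun M : Matrix n n 𝕜 => M.det) C H = C.det * (C⁻¹ * H).trace := by
  have hline : HasDerivAt (fun t : 𝕜 => C + t • H) H 0 :=
    .const_add C (by simpa using (hasDerivAt_id (0 : 𝕜)).smul_const H)
  have hchain := (differentiable_det C).hasFDerivAt.comp_hasDerivAt_of_eq 0 hline (by simp)
  have hfactor : (fun t : 𝕜 => (C + t • H).det) = fun t => C.det * (1 + t • (C⁻¹ * H)).det := by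
    funext t
    rw [← det_mul, mul_add, mul_one, mul_smul_comm, ← Matrix.mul_assoc, mul_nonsing_inv C hC,
      Matrix.one_mul]
  have hjacobi := (hasDerivAt_det_one_add_smul (C⁻¹ * H)).const_mul C.det
  rw [← hfactor] at hjacobi
  exact hchain.unique hjacobi

end Matrix

/-- **Fréchet derivative of the Neohookean deviatoric free-energy density.**
For a 3×3 real matrix `C` with `det C > 0`, the map
`A^dev(C) = ½ μ ((det C)^(−1/3) tr C − 3)` is Fréchet differentiable at `C`,
with derivative in direction `H` equal to
`½ μ (det C)^(−1/3) (tr H − (1/3)(tr C) tr(C⁻¹ H))`. -/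
theorem neohookean_deviatoric_hasFDerivAt
    (mu : ℝ) (C : Matrix (Fin 3) (Fin 3) ℝ) (hC : 0 < C.det)
    (Adev : Matrix (Fin 3) (Fin 3) ℝ → ℝ)
    (hAdev : ∀ X : Matrix (Fin 3) (Fin 3) ℝ,
      Adev X = 1 / 2 * mu * (X.det ^ (-(1 / 3 : ℝ)) * Matrix.trace X - 3))
    (A' : Matrix (Fin 3) (Fin 3) ℝ →L[ℝ] ℝ)
    (hA' : ∀ H : Matrix (Fin 3) (Fin 3) ℝ,
      A' H = 1 / 2 * mu * C.det ^ (-(1 / 3 : ℝ)) *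
        (Matrix.trace H - 1 / 3 * Matrix.trace C * Matrix.trace (C⁻¹ * H))) :
    HasFDerivAt Adev A' C := by
  have hdetPow := (differentiable_det C).hasFDerivAt.rpow_const (p := -(1 / 3)) (Or.inl hC.ne')
  have htrace := (LinearMap.toContinuousLinearMap (traceLinearMap (Fin 3) ℝ ℝ)).hasFDerivAt (x := C)
  have hA := ((hdetPow.mul htrace).sub_const 3).const_mul (1 / 2 * mu)
  rw [show Adev = _ from funext hAdev]
  refine hA.congr_fderiv (ContinuousLinearMap.ext fun H => ?_)
  have hpow : C.det ^ (-(1 / 3 : ℝ) - 1) * C.det = C.det ^ (-(1 / 3 : ℝ)) := by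
    rw [Real.rpow_sub_one hC.ne', div_mul_cancel₀ _ hC.ne']
  -- `simp` cannot unfold these applications: the trace map carries the product topology on
  -- matrices, equal to the Frobenius one only up to unfolding.
  show 1 / 2 * mu * (C.det ^ (-(1 / 3) : ℝ) * H.trace +
      C.trace * (-(1 / 3) * C.det ^ (-(1 / 3) - 1 : ℝ) * fderiv ℝ (fun M => M.det) C H)) = A' H
  rw [fderiv_det_apply (isUnit_iff_ne_zero.mpr hC.ne'), hA']
  linear_combination (1 / 2 * mu * Matrix.trace C * (-(1 / 3)) * (C⁻¹ * H).trace) * hpow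
end
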